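/- For every m ∈ ℝ, the equilibrium e1^m = (m,0,0) of the Rabinovich system is nonlinearly (Lyapunov) stable: for every ε > 0 there exists δ > 0 such that every solution x : [0,∞) → ℝ³ of the Rabinovich system with ‖x(0) − (m,0,0)‖ < δ satisfies ‖x(t) − (m,0,0)‖ < ε for all t ≥ 0. -/

import Mathlib

open Matrix

/-- The Rabinovich vector field X(x₁,x₂,x₃) = (x₂x₃, −x₁x₃, x₁x₂). -/
def rabinovichField (x : Fin 3 → ℝ) : Fin 3 → ℝ :=
  ![x 1 * x 2, -(x 0 * x 2), x 0 * x 1]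

/-- x : [0,∞) → ℝ³ is a solution of the Rabinovich system. -/
def IsSolutionOnIci (x : ℝ → Fin 3 → ℝ) : Prop :=
  ∀ t ∈ Set.Ici (0 : ℝ), ∀ i : Fin 3,
    HasDerivWithinAt (fun s => x s i) (rabinovichField (x t) i) (Set.Ici (0 : ℝ)) t

/-!
The system has the first integrals `x₁² + x₂²` and `x₂² + x₃²`. Hence along a solution the
quantity `|x₁² + x₂² - m²| + x₂² + x₃²`, which vanishes at `(m,0,0)`, is constant, and it bounds
`x₂²`, `x₃²` and `|x₁² - m²|`. To turn the bound on `|x₁² - m²|` into one on `|x₁ - m|`, one needs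
`x₁` to keep the sign of `m`: for `m ≠ 0` the bound keeps `x₁` away from `0`, so by continuity it
cannot change sign.
-/

open Set Filter Topology

lemma pos_of_continuousOn_of_ne_zero {X : Type*} [TopologicalSpace X] {s : Set X}
    {f : X → ℝ} {a b : X} (hs : IsPreconnected s) (hf : ContinuousOn f s)
    (hne : ∀ x ∈ s, f x ≠ 0) (ha : a ∈ s) (hb : b ∈ s) (hfa : 0 < f a) : 0 < f b := by
  by_contra! hfb
  obtain ⟨c, hc, hfc⟩ := hs.intermediate_value hb ha hf ⟨hfb, hfa.le⟩
  exact hne c hc hfc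

lemma sq_sub_le_abs_sq_sub_sq {a m : ℝ} (h : 0 ≤ a * m) : (a - m) ^ 2 ≤ |a ^ 2 - m ^ 2| := by
  rcases le_total (m ^ 2) (a ^ 2) with hle | hle
  · rw [abs_of_nonneg (sub_nonneg.2 hle)]
    nlinarith [sq_nonneg (a - m), sq_nonneg (a + m)]
  · rw [abs_of_nonpos (sub_nonpos.2 hle)]
    nlinarith [sq_nonneg (a - m), sq_nonneg (a + m)]

def invariantDefect (m : ℝ) (p : Fin 3 → ℝ) : ℝ :=
  |p 0 ^ 2 + p 1 ^ 2 - m ^ 2| + (p 1 ^ 2 + p 2 ^ 2)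

lemma continuous_invariantDefect (m : ℝ) : Continuous (invariantDefect m) := by
  unfold invariantDefect
  fun_prop

lemma invariantDefect_e1 (m : ℝ) : invariantDefect m ![m, 0, 0] = 0 := by
  simp [invariantDefect]

lemma eventually_invariantDefect_lt (m : ℝ) {ε : ℝ} (hε : 0 < ε) :
    ∀ᶠ p in 𝓝 ![m, 0, 0], invariantDefect m p < ε ^ 2 ∧
      (m = 0 ∨ 0 < p 0 * m ∧ invariantDefect m p < m ^ 2) := by
  have hcont := (continuous_invariantDefect m).continuousAt (x := ![m, 0, 0])
  refine (hcont.eventually_lt continuousAt_const ?_).and ?_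
  · rw [invariantDefect_e1]; positivity
  rcases eq_or_ne m 0 with hm | hm
  · exact Eventually.of_forall fun _ => Or.inl hm
  have hsign : ∀ᶠ p in 𝓝 ![m, 0, 0], 0 < p 0 * m :=
    (continuousAt_const.eventually_lt ((continuous_apply 0).continuousAt.mul continuousAt_const)
      (by simpa using mul_self_pos.2 hm))
  have hdefect : ∀ᶠ p in 𝓝 ![m, 0, 0], invariantDefect m p < m ^ 2 :=
    hcont.eventually_lt continuousAt_const (by rw [invariantDefect_e1]; positivity)
  exact (hsign.and hdefect).mono fun _ h => Or.inr h

namespace IsSolutionOnIci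

variable {x : ℝ → Fin 3 → ℝ}

lemma continuousOn (hx : IsSolutionOnIci x) (i : Fin 3) :
    ContinuousOn (fun s => x s i) (Ici 0) :=
  fun t ht => (hx t ht i).continuousWithinAt

lemma sq_add_sq_eq (hx : IsSolutionOnIci x) {i j : Fin 3}
    (hij : ∀ p, p i * rabinovichField p i + p j * rabinovichField p j = 0) {t : ℝ}
    (ht : 0 ≤ t) : x t i ^ 2 + x t j ^ 2 = x 0 i ^ 2 + x 0 j ^ 2 := by
  have hderiv : ∀ s ∈ Ico 0 t,
      HasDerivWithinAt (fun s => x s i ^ 2 + x s j ^ 2) 0 (Ici s) s := by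
    intro s hs
    have hs0 : s ∈ Ici (0 : ℝ) := hs.1
    have h := ((hx s hs0 i).fun_pow 2).fun_add ((hx s hs0 j).fun_pow 2)
    refine (h.mono (Ici_subset_Ici.2 hs0)).congr_deriv ?_
    linear_combination 2 * hij (x s)
  have hcont : ContinuousOn (fun s => x s i ^ 2 + x s j ^ 2) (Icc 0 t) :=
    (((hx.continuousOn i).pow 2).add ((hx.continuousOn j).pow 2)).mono Icc_subset_Ici_self
  exact constant_of_has_deriv_right_zero hcont hderiv t ⟨ht, le_rfl⟩

lemma sq_add_sq_eq_01 (hx : IsSolutionOnIci x) {t : ℝ} (ht : 0 ≤ t) :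
    x t 0 ^ 2 + x t 1 ^ 2 = x 0 0 ^ 2 + x 0 1 ^ 2 :=
  hx.sq_add_sq_eq (fun p => by simp [rabinovichField]; ring) ht

lemma sq_add_sq_eq_12 (hx : IsSolutionOnIci x) {t : ℝ} (ht : 0 ≤ t) :
    x t 1 ^ 2 + x t 2 ^ 2 = x 0 1 ^ 2 + x 0 2 ^ 2 :=
  hx.sq_add_sq_eq (fun p => by simp [rabinovichField]; ring) ht

variable {m : ℝ}

lemma le_invariantDefect (hx : IsSolutionOnIci x) {t : ℝ} (ht : 0 ≤ t) :
    |x t 0 ^ 2 - m ^ 2| ≤ invariantDefect m (x 0) ∧ x t 1 ^ 2 ≤ invariantDefect m (x 0) ∧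
      x t 2 ^ 2 ≤ invariantDefect m (x 0) := by
  have h01 := hx.sq_add_sq_eq_01 ht
  have h12 := hx.sq_add_sq_eq_12 ht
  have habs : |x t 0 ^ 2 - m ^ 2| ≤ |x 0 0 ^ 2 + x 0 1 ^ 2 - m ^ 2| + x t 1 ^ 2 :=
    calc |x t 0 ^ 2 - m ^ 2| = |(x 0 0 ^ 2 + x 0 1 ^ 2 - m ^ 2) - x t 1 ^ 2| := by
          rw [← h01]; congr 1; ring
      _ ≤ |x 0 0 ^ 2 + x 0 1 ^ 2 - m ^ 2| + x t 1 ^ 2 :=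
          (abs_sub _ _).trans_eq (by rw [abs_sq])
  unfold invariantDefect
  refine ⟨?_, ?_, ?_⟩ <;>
    linarith [sq_nonneg (x t 1), sq_nonneg (x t 2), abs_nonneg (x 0 0 ^ 2 + x 0 1 ^ 2 - m ^ 2)]

lemma pos_mul_of_invariantDefect_lt (hx : IsSolutionOnIci x) (h0 : 0 < x 0 0 * m)
    (hd : invariantDefect m (x 0) < m ^ 2) {t : ℝ} (ht : 0 ≤ t) : 0 < x t 0 * m := by
  refine pos_of_continuousOn_of_ne_zero (f := fun s => x s 0 * m) isPreconnected_Ici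
    ((hx.continuousOn 0).mul continuousOn_const) (fun s hs hs0 => ?_) self_mem_Ici ht h0
  have hxs : x s 0 = 0 := (mul_eq_zero.1 hs0).resolve_right (right_ne_zero_of_mul h0.ne')
  have hsq := (abs_le.1 (hx.le_invariantDefect (m := m) hs).1).1
  rw [hxs] at hsq
  linarith

lemma norm_sub_e1_lt (hx : IsSolutionOnIci x) {ε : ℝ} (hε : 0 < ε)
    (hd : invariantDefect m (x 0) < ε ^ 2)
    (hsign : m = 0 ∨ 0 < x 0 0 * m ∧ invariantDefect m (x 0) < m ^ 2) {t : ℝ} (ht : 0 ≤ t) :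
    ‖x t - ![m, 0, 0]‖ < ε := by
  have hmul : 0 ≤ x t 0 * m := by
    rcases hsign with hm | ⟨h0, hdm⟩
    · simp [hm]
    · exact (hx.pos_mul_of_invariantDefect_lt h0 hdm ht).le
  obtain ⟨h0, h1, h2⟩ := hx.le_invariantDefect (m := m) ht
  rw [pi_norm_lt_iff hε]
  intro i
  rw [Real.norm_eq_abs]
  refine abs_lt_of_sq_lt_sq ?_ hε.le
  fin_cases i
  · simpa using (sq_sub_le_abs_sq_sub_sq hmul).trans h0 |>.trans_lt hd
  · simpa using h1.trans_lt hd
  · simpa using h2.trans_lt hd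

end IsSolutionOnIci

/-- For every m ∈ ℝ, the equilibrium (m,0,0) of the Rabinovich system is
nonlinearly (Lyapunov) stable. -/
theorem rabinovich_e1_nonlinearly_stable (m : ℝ) :
    ∀ ε > (0 : ℝ), ∃ δ > (0 : ℝ), ∀ x : ℝ → Fin 3 → ℝ,
      IsSolutionOnIci x → ‖x 0 - ![m, 0, 0]‖ < δ →
        ∀ t ≥ (0 : ℝ), ‖x t - ![m, 0, 0]‖ < ε := by
  intro ε hε
  obtain ⟨δ, hδ, hnear⟩ := Metric.eventually_nhds_iff.1 (eventually_invariantDefect_lt m hε)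
  refine ⟨δ, hδ, fun x hx h0 t ht => ?_⟩
  obtain ⟨hd, hsign⟩ := hnear (by rwa [dist_eq_norm])
  exact hx.norm_sub_e1_lt hε hd hsign ht
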